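/- The formal power series B(T) = Σ_{n≥0} ((6n+1)/(6n-1)) * (6n)!/((3n)!(2n)!) * T^n in ℚ[[T]] satisfies the differential equation 432·T²·B''(T) + (864·T - 1)·B'(T) - 84·B(T) = 0, where derivatives are formal derivatives of power series. -/

import Mathlib

/-- `a n = (6n)! / ((3n)! (2n)!)`, as a rational number. -/
noncomputable def pixtonA (n : ℕ) : ℚ :=
  (Nat.factorial (6 * n) : ℚ) / ((Nat.factorial (3 * n) : ℚ) * (Nat.factorial (2 * n) : ℚ))

/-- `b n = ((6n+1)/(6n-1)) * a n`. -/
noncomputable def pixtonB (n : ℕ) : ℚ :=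
  ((6 * (n : ℚ) + 1) / (6 * (n : ℚ) - 1)) * pixtonA n

/-- The power series `B(T)`. -/
noncomputable def seriesB : PowerSeries ℚ := PowerSeries.mk pixtonB

/-!
Comparing coefficients of `T^n`, the operator `T^k (d/dT)^k` multiplies the `n`-th coefficient by
`n (n - 1) ⋯ (n - k + 1)`, so the equation says exactly that
`(n + 1) b(n + 1) = (432 n² + 432 n - 84) b(n) = 12 (6n + 7)(6n - 1) b(n)`.
This recurrence follows from `(n + 1) a(n + 1) = 12 (6n + 5)(6n + 1) a(n)`, a ratio of factorials.
-/

namespace PowerSeries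

variable {R : Type*} [CommSemiring R]

theorem coeff_X_pow_mul_iterate_derivative (f : R⟦X⟧) (k n : ℕ) :
    coeff n (X ^ k * (d⁄dX R)^[k] f) = n.descFactorial k * coeff n f := by
  rw [coeff_X_pow_mul']
  split_ifs with hkn
  · obtain ⟨m, rfl⟩ := Nat.exists_eq_add_of_le' hkn
    rw [Nat.add_sub_cancel, coeff_iterate_derivative, Nat.add_descFactorial_eq_ascFactorial]
  · rw [Nat.descFactorial_eq_zero_iff_lt.mpr (not_le.mp hkn), Nat.cast_zero, zero_mul]

end PowerSeries

theorem pixtonA_succ (n : ℕ) :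
    ((n : ℚ) + 1) * pixtonA (n + 1) = 12 * (6 * n + 5) * (6 * n + 1) * pixtonA n := by
  have h6 : ((6 * (n + 1)).factorial : ℚ) =
      (6 * n + 6) * (6 * n + 5) * (6 * n + 4) * (6 * n + 3) * (6 * n + 2) * (6 * n + 1) *
        (6 * n).factorial := by
    rw [show 6 * (n + 1) = 6 * n + 6 by ring]; push_cast [Nat.factorial_succ]; ring
  have h3 : ((3 * (n + 1)).factorial : ℚ) = (3 * n + 3) * (3 * n + 2) * (3 * n + 1) *
      (3 * n).factorial := by
    rw [show 3 * (n + 1) = 3 * n + 3 by ring]; push_cast [Nat.factorial_succ]; ring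
  have h2 : ((2 * (n + 1)).factorial : ℚ) = (2 * n + 2) * (2 * n + 1) * (2 * n).factorial := by
    rw [show 2 * (n + 1) = 2 * n + 2 by ring]; push_cast [Nat.factorial_succ]; ring
  unfold pixtonA
  rw [h6, h3, h2]
  field_simp
  ring

theorem sub_one_mul_pixtonB (n : ℕ) :
    (6 * (n : ℚ) - 1) * pixtonB n = (6 * n + 1) * pixtonA n := by
  have hn : (6 * n - 1 : ℚ) ≠ 0 := sub_ne_zero.mpr (by exact_mod_cast (by omega : 6 * n ≠ 1))
  rw [pixtonB, ← mul_assoc, mul_div_cancel₀ _ hn]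

theorem pixtonB_succ (n : ℕ) :
    ((n : ℚ) + 1) * pixtonB (n + 1) = 12 * (6 * n + 7) * (6 * n - 1) * pixtonB n := by
  have h5 : (6 * n + 5 : ℚ) ≠ 0 := by positivity
  refine mul_left_cancel₀ h5 ?_
  have hsucc := sub_one_mul_pixtonB (n + 1)
  push_cast at hsucc
  linear_combination (n + 1 : ℚ) * hsucc + (6 * n + 7 : ℚ) * pixtonA_succ n
    - 12 * (6 * n + 5 : ℚ) * (6 * n + 7) * sub_one_mul_pixtonB n

open PowerSeries in
theorem seriesB_ODE :
    432 * X ^ 2 * derivativeFun (derivativeFun seriesB)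
      + (864 * X - 1) * derivativeFun seriesB - 84 * seriesB = 0 := by
  have hD (f : ℚ⟦X⟧) : derivativeFun f = d⁄dX ℚ f := rfl
  have hsplit : 432 * X ^ 2 * derivativeFun (derivativeFun seriesB)
      + (864 * X - 1) * derivativeFun seriesB - 84 * seriesB =
      C 432 * (X ^ 2 * (d⁄dX ℚ)^[2] seriesB) + C 864 * (X ^ 1 * (d⁄dX ℚ)^[1] seriesB)
        - d⁄dX ℚ seriesB - C 84 * seriesB := by
    simp only [hD, map_ofNat, Function.iterate_succ, Function.iterate_zero, Function.comp_apply,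
      id]
    ring
  ext n
  rw [hsplit]
  simp only [map_sub, map_add, map_zero, coeff_C_mul, coeff_X_pow_mul_iterate_derivative,
    coeff_derivative, seriesB, coeff_mk]
  push_cast [Nat.cast_descFactorial_two, Nat.descFactorial_one]
  linear_combination -pixtonB_succ n
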